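/- (Success probability of the anonymous entanglement protocol.) Let n ≥ 2 and let s, r ∈ Fin n be distinct. Under the n-qubit W state ψ_W, the total Born-rule probability of measurement outcomes x satisfying x_j = 0 for all j ∉ {s, r} (i.e., all n−2 measuring agents obtain outcome 0) equals 2/n: Σ_{x : x_j = 0 for all j ∉ {s,r}} |ψ_W(x)|² = 2/n. -/

import Mathlib

/-- Hamming weight of a bitstring. -/
def hammingWt {n : ℕ} (x : Fin n → ZMod 2) : ℕ :=
  (Finset.univ.filter fun i => x i = 1).card

/-- The `n`-qubit W state: amplitude `1/√n` on each Hamming-weight-1 bitstring. -/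
noncomputable def wState (n : ℕ) : EuclideanSpace ℂ (Fin n → ZMod 2) :=
  WithLp.toLp 2 (fun x => if hammingWt x = 1 then ((1 / Real.sqrt n : ℝ) : ℂ) else 0)

/-- Indicator bitstring of a set of qubits. -/
def chi {n : ℕ} (S : Finset (Fin n)) : Fin n → ZMod 2 :=
  fun i => if i ∈ S then 1 else 0

/-- Pauli-X flip on the qubits in `S`. -/
noncomputable def pauliX {n : ℕ} (S : Finset (Fin n))
    (ψ : EuclideanSpace ℂ (Fin n → ZMod 2)) : EuclideanSpace ℂ (Fin n → ZMod 2) :=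
  WithLp.toLp 2 (fun x => ψ (x + chi S))

/-- Bitstring with a single 1 in position `i`. -/
def eVec {n : ℕ} (i : Fin n) : Fin n → ZMod 2 :=
  fun j => if j = i then 1 else 0

/-!
`|ψ_W x|²` is `1/n` on the weight-one strings `eVec i` and `0` elsewhere. The weight-one strings
vanishing outside a set `S` of qubits are exactly the `eVec i` with `i ∈ S`, so the probability
that all qubits outside `S` read `0` is `|S|/n`; here `S = {s, r}`.
-/

lemma eVec_apply_self {n : ℕ} (i : Fin n) : eVec i i = 1 := if_pos rfl

lemma eVec_apply_of_ne {n : ℕ} {i j : Fin n} (h : j ≠ i) : eVec i j = 0 := if_neg h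

lemma eVec_injective {n : ℕ} : Function.Injective (eVec : Fin n → Fin n → ZMod 2) := by
  intro i j hij
  by_contra hne
  have h := congrFun hij i
  rw [eVec_apply_self, eVec_apply_of_ne hne] at h
  exact one_ne_zero h

def eVecEmb (n : ℕ) : Fin n ↪ (Fin n → ZMod 2) := ⟨eVec, eVec_injective⟩

lemma hammingWt_eq_one_iff {n : ℕ} (x : Fin n → ZMod 2) :
    hammingWt x = 1 ↔ ∃ i, x = eVec i := by
  constructor
  · intro hw
    obtain ⟨i, hi⟩ := Finset.card_eq_one.mp hw
    have hone : ∀ j, x j = 1 ↔ j = i := fun j => by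
      simpa using Finset.ext_iff.mp hi j
    refine ⟨i, funext fun j => ?_⟩
    by_cases hji : j = i
    · rw [hji, eVec_apply_self, hone]
    · rw [eVec_apply_of_ne hji]
      have : ∀ a : ZMod 2, a ≠ 1 → a = 0 := by decide
      exact this _ (mt (hone j).mp hji)
  · rintro ⟨i, rfl⟩
    rw [hammingWt, Finset.card_eq_one]
    exact ⟨i, Finset.ext fun j => by by_cases hji : j = i <;> simp [eVec, hji]⟩

lemma norm_wState_sq (n : ℕ) (x : Fin n → ZMod 2) :
    ‖wState n x‖ ^ 2 = if hammingWt x = 1 then 1 / (n : ℝ) else 0 := by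
  split_ifs with hw <;> simp [wState, hw]

lemma filter_supported_hammingWt_one {n : ℕ} (S : Finset (Fin n)) :
    Finset.univ.filter (fun x : Fin n → ZMod 2 => (∀ j ∉ S, x j = 0) ∧ hammingWt x = 1) =
      S.map (eVecEmb n) := by
  ext x
  simp only [Finset.mem_filter, Finset.mem_univ, true_and, Finset.mem_map, hammingWt_eq_one_iff]
  constructor
  · rintro ⟨hS, i, rfl⟩
    refine ⟨i, ?_, rfl⟩
    by_contra hi
    exact one_ne_zero ((eVec_apply_self i).symm.trans (hS i hi))
  · rintro ⟨i, hi, rfl⟩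
    exact ⟨fun j hj => eVec_apply_of_ne (ne_of_mem_of_not_mem hi hj).symm, i, rfl⟩

theorem sum_norm_wState_sq_supported {n : ℕ} (S : Finset (Fin n)) :
    ∑ x ∈ Finset.univ.filter (fun x : Fin n → ZMod 2 => ∀ j ∉ S, x j = 0), ‖wState n x‖ ^ 2 =
      S.card / n := by
  simp_rw [norm_wState_sq, ← Finset.sum_filter, Finset.filter_filter,
    filter_supported_hammingWt_one, Finset.sum_const, Finset.card_map, nsmul_eq_mul]
  ring

theorem stmt7_general (n : ℕ) (s r : Fin n) (hsr : s ≠ r) :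
    ∑ x ∈ Finset.univ.filter
        (fun x : Fin n → ZMod 2 => ∀ j, j ≠ s → j ≠ r → x j = 0),
      ‖wState n x‖ ^ 2 = (2 : ℝ) / n := by
  have hpred : ∀ x : Fin n → ZMod 2,
      (∀ j, j ≠ s → j ≠ r → x j = 0) ↔ ∀ j ∉ ({s, r} : Finset (Fin n)), x j = 0 := by
    simp [not_or, and_imp]
  simp_rw [hpred, sum_norm_wState_sq_supported, Finset.card_pair hsr, Nat.cast_ofNat]

theorem stmt7 (n : ℕ) (hn : 2 ≤ n) (s r : Fin n) (hsr : s ≠ r) :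
    ∑ x ∈ Finset.univ.filter
        (fun x : Fin n → ZMod 2 => ∀ j, j ≠ s → j ≠ r → x j = 0),
      ‖wState n x‖ ^ 2 = (2 : ℝ) / n :=
  stmt7_general n s r hsr
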